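/- Let M : H(n) → ℝ^m be a 1-complete measurement. Then there exists a constant C > 0 depending only on M such that the following holds. Let x ∈ ℂⁿ be nonzero, let E ∈ H(n), let ε ≥ ‖M(E)‖₂ with ε > 0, and let Y be a positive semidefinite Hermitian matrix minimizing tr(Y) subject to Y ⪰ 0 and ‖M(Y) − M(xx* + E)‖₂ ≤ ε. Set x̂ := √(λ₁(Y))·x′, where x′ is a unit-norm eigenvector of Y for its largest eigenvalue λ₁(Y). Then ‖xx* − x̂x̂*‖₂ ≤ 2Cε, and there exists φ ∈ [0,2π) such that ‖x − e^{iφ}x̂‖₂ ≤ (2√2·C/‖x‖₂)·ε. -/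

import Mathlib

/-!
The heart of the proof is a robust form of `1`-completeness: there is `C` with
`‖xx* - Y‖₂ ≤ C ‖M(xx* - Y)‖₂` for all `x` and all `Y ⪰ 0`. Since `D = xx* - Y ⪯ xx*`, the
Hermitian matrix `D` has at most one positive eigenvalue, hence `D ⪯ ‖D‖₂ vv*` for a unit
eigenvector `v`. After scaling to `‖D‖₂ = 1`, the pair `(D, v)` ranges over a compact set on which
`M D = M(vv*) - M(vv* - D) ≠ 0` by `1`-completeness, so `‖M D‖` is bounded below there.

A feasible `Y` has `‖M(xx* - Y)‖ ≤ 2ε`, and the truncation `λ₁ x'x'*` of `Y` satisfies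
`‖Y - λ₁ x'x'*‖₂² = ‖Y‖₂² - λ₁² ≤ ‖Y - xx*‖₂²` because `x*Yx ≤ λ₁‖x‖²`; the triangle inequality
gives the first bound. For the second, choosing the phase that makes `⟨x, e^{iφ}x̂⟩` real
and nonnegative turns `‖x‖² ‖x - e^{iφ}x̂‖² ≤ 2 ‖xx* - x̂x̂*‖₂²` into an inequality between
`‖x‖`, `‖x̂‖` and `|⟨x, x̂⟩|`.
-/

open Matrix
open scoped ComplexOrder

noncomputable section

/-- The Frobenius norm `‖X‖₂` of a complex matrix. -/
def frobNorm {n : ℕ} (X : Matrix (Fin n) (Fin n) ℂ) : ℝ :=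
  Real.sqrt (∑ i, ∑ j, Complex.normSq (X i j))

/-- The Euclidean norm `‖x‖₂` of a vector in `ℂⁿ`. -/
def vecNorm {n : ℕ} (x : Fin n → ℂ) : ℝ :=
  Real.sqrt (∑ i, Complex.normSq (x i))

def rComplete {n : ℕ} {ι : Type*} [Fintype ι]
    (M : Matrix (Fin n) (Fin n) ℂ →ₗ[ℝ] EuclideanSpace ℝ ι) (r : ℕ) : Prop :=
  ∀ X X' : Matrix (Fin n) (Fin n) ℂ, X.PosSemidef → X.rank ≤ r → X'.PosSemidef →
    X ≠ X' → M X ≠ M X'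

open scoped InnerProductSpace

lemma star_dotProduct_vecMulVec_mulVec {ι : Type*} [Fintype ι] (v w : ι → ℂ) :
    star w ⬝ᵥ (vecMulVec v (star v) *ᵥ w) = (Complex.normSq (star v ⬝ᵥ w) : ℂ) := by
  rw [← Complex.mul_conj, mul_comm]
  simp only [dotProduct, mulVec, vecMulVec_apply, map_sum, map_mul, Finset.mul_sum,
    Finset.sum_mul, Pi.star_apply, Complex.star_def, Complex.conj_conj]
  rw [Finset.sum_comm]
  exact Finset.sum_congr rfl fun i _ => Finset.sum_congr rfl fun j _ => by ring

lemma exists_ne_zero_mul_add_mul_eq_zero {R : Type*} [CommRing R] [Nontrivial R] (a b : R) :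
    ∃ c d : R, (c ≠ 0 ∨ d ≠ 0) ∧ c * a + d * b = 0 := by
  by_cases ha : a = 0
  · exact ⟨1, 0, .inl one_ne_zero, by simp [ha]⟩
  · exact ⟨b, -a, .inr (neg_ne_zero.mpr ha), by ring⟩

namespace Matrix.IsHermitian

variable {n : Type*} [Fintype n] [DecidableEq n] {A : Matrix n n ℂ}

lemma star_dotProduct_mulVec_eq_sum (hA : A.IsHermitian) (w : n → ℂ) :
    star w ⬝ᵥ (A *ᵥ w) =
      ↑(∑ i, hA.eigenvalues i * ‖⟪hA.eigenvectorBasis i, WithLp.toLp 2 w⟫_ℂ‖ ^ 2) := by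
  set b := hA.eigenvectorBasis
  have hb (i : n) :
      ⟪b i, WithLp.toLp 2 (A *ᵥ w)⟫_ℂ = hA.eigenvalues i * ⟪b i, WithLp.toLp 2 w⟫_ℂ := by
    have := (isSymmetric_toEuclideanLin_iff.mpr hA) (b i) (WithLp.toLp 2 w)
    simp only [toLpLin_apply, b, mulVec_eigenvectorBasis] at this
    rw [← this, WithLp.toLp_smul, WithLp.toLp_ofLp, inner_smul_left_eq_smul, Complex.real_smul]
  rw [dotProduct_comm, ← EuclideanSpace.inner_toLp_toLp, ← b.sum_inner_mul_inner]
  push_cast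
  refine Finset.sum_congr rfl fun i _ => ?_
  rw [hb, ← inner_conj_symm, mul_left_comm, Complex.conj_mul']

lemma re_star_dotProduct_mulVec_le (hA : A.IsHermitian) {μ : ℝ}
    (hμ : ∀ i, hA.eigenvalues i ≤ μ) (w : n → ℂ) :
    (star w ⬝ᵥ (A *ᵥ w)).re ≤ μ * ‖WithLp.toLp 2 w‖ ^ 2 := by
  rw [hA.star_dotProduct_mulVec_eq_sum, Complex.ofReal_re,
    ← hA.eigenvectorBasis.sum_sq_norm_inner_right, Finset.mul_sum]
  gcongr with i
  exact hμ i

/-- Two positive eigenvalues are impossible: the plane of their eigenvectors would meet `x^⊥`,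
where `A ⪯ xx*` is nonpositive. -/
lemma eigenvalues_nonpos_of_posSemidef_vecMulVec_sub (hA : A.IsHermitian) {x : n → ℂ}
    (hx : (vecMulVec x (star x) - A).PosSemidef) {i j : n} (hij : i ≠ j)
    (hi : 0 < hA.eigenvalues i) : hA.eigenvalues j ≤ 0 := by
  by_contra! hj
  obtain ⟨c, d, hcd, hxw⟩ := exists_ne_zero_mul_add_mul_eq_zero
    ⟪WithLp.toLp 2 x, hA.eigenvectorBasis i⟫_ℂ ⟪WithLp.toLp 2 x, hA.eigenvectorBasis j⟫_ℂ
  set w := c • hA.eigenvectorBasis i + d • hA.eigenvectorBasis j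
  have hxw' : star x ⬝ᵥ w.ofLp = 0 := by
    rw [dotProduct_comm, ← EuclideanSpace.inner_toLp_toLp, WithLp.toLp_ofLp, inner_add_right,
      inner_smul_right, inner_smul_right, hxw]
  have hAw : star w.ofLp ⬝ᵥ (A *ᵥ w.ofLp) =
      ↑(hA.eigenvalues i * ‖c‖ ^ 2 + hA.eigenvalues j * ‖d‖ ^ 2) := by
    rw [hA.star_dotProduct_mulVec_eq_sum, WithLp.toLp_ofLp, Fintype.sum_eq_add i j hij]
    · simp [w, hA.eigenvectorBasis.inner_eq_ite, hij, hij.symm]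
    · rintro k ⟨hki, hkj⟩
      simp [w, hA.eigenvectorBasis.inner_eq_ite, hki, hkj]
  have hpos : 0 < hA.eigenvalues i * ‖c‖ ^ 2 + hA.eigenvalues j * ‖d‖ ^ 2 := by
    rcases hcd with hc | hd
    · exact add_pos_of_pos_of_nonneg (by positivity) (by positivity)
    · exact add_pos_of_nonneg_of_pos (by positivity) (by positivity)
  have hquad := hx.dotProduct_mulVec_nonneg w.ofLp
  rw [sub_mulVec, dotProduct_sub, star_dotProduct_vecMulVec_mulVec, hxw', hAw,
    Complex.normSq_zero, Complex.ofReal_zero, zero_sub, Left.nonneg_neg_iff] at hquad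
  exact (Complex.real_le_real.mp hquad).not_gt hpos

lemma posSemidef_smul_vecMulVec_eigenvectorBasis_sub (hA : A.IsHermitian) {x : n → ℂ}
    (hx : (vecMulVec x (star x) - A).PosSemidef) {k : n}
    (hk : ∀ j, hA.eigenvalues j ≤ hA.eigenvalues k) {t : ℝ} (ht : hA.eigenvalues k ≤ t) :
    ((t : ℂ) • vecMulVec ⇑(hA.eigenvectorBasis k) (star ⇑(hA.eigenvectorBasis k)) -
      A).PosSemidef := by
  have hnonpos (j : n) (hj : j ≠ k) : hA.eigenvalues j ≤ 0 := by
    by_cases hpos : 0 < hA.eigenvalues k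
    · exact hA.eigenvalues_nonpos_of_posSemidef_vecMulVec_sub hx (Ne.symm hj) hpos
    · exact (hk j).trans (not_lt.mp hpos)
  refine .of_dotProduct_mulVec_nonneg
    (((posSemidef_vecMulVec_self_star _).1.smul (Complex.conj_ofReal t)).sub hA) fun w => ?_
  rw [sub_mulVec, dotProduct_sub, smul_mulVec, dotProduct_smul, star_dotProduct_vecMulVec_mulVec,
    hA.star_dotProduct_mulVec_eq_sum, smul_eq_mul, ← Complex.ofReal_mul, sub_nonneg,
    Complex.real_le_real, ← Finset.add_sum_erase _ _ (Finset.mem_univ k)]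
  have hrest : ∑ j ∈ Finset.univ.erase k,
      hA.eigenvalues j * ‖⟪hA.eigenvectorBasis j, WithLp.toLp 2 w⟫_ℂ‖ ^ 2 ≤ 0 :=
    Finset.sum_nonpos fun j hj =>
      mul_nonpos_of_nonpos_of_nonneg (hnonpos j (Finset.ne_of_mem_erase hj)) (sq_nonneg _)
  have hk_inner : ‖⟪hA.eigenvectorBasis k, WithLp.toLp 2 w⟫_ℂ‖ ^ 2 =
      Complex.normSq (star ⇑(hA.eigenvectorBasis k) ⬝ᵥ w) := by
    rw [EuclideanSpace.inner_eq_star_dotProduct, dotProduct_comm, Complex.normSq_eq_norm_sq]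
  rw [← hk_inner]
  nlinarith [sq_nonneg ‖⟪hA.eigenvectorBasis k, WithLp.toLp 2 w⟫_ℂ‖]

end Matrix.IsHermitian

section Frobenius

variable {n : ℕ}

def toEuclideanEntries (Z : Matrix (Fin n) (Fin n) ℂ) : EuclideanSpace ℂ (Fin n × Fin n) :=
  WithLp.toLp 2 fun p => Z p.1 p.2

lemma toEuclideanEntries_sub (A B : Matrix (Fin n) (Fin n) ℂ) :
    toEuclideanEntries (A - B) = toEuclideanEntries A - toEuclideanEntries B := rfl

lemma toEuclideanEntries_smul {R : Type*} [SMul R ℂ] (c : R) (A : Matrix (Fin n) (Fin n) ℂ) :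
    toEuclideanEntries (c • A) = c • toEuclideanEntries A := rfl

lemma frobNorm_eq_norm (Z : Matrix (Fin n) (Fin n) ℂ) : frobNorm Z = ‖toEuclideanEntries Z‖ := by
  simp [frobNorm, EuclideanSpace.norm_eq, toEuclideanEntries, Fintype.sum_prod_type,
    Complex.normSq_eq_norm_sq]

lemma vecNorm_eq_norm (x : Fin n → ℂ) : vecNorm x = ‖WithLp.toLp 2 x‖ := by
  simp [vecNorm, EuclideanSpace.norm_eq, Complex.normSq_eq_norm_sq]

lemma frobNorm_nonneg (Z : Matrix (Fin n) (Fin n) ℂ) : 0 ≤ frobNorm Z := Real.sqrt_nonneg _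

lemma vecNorm_nonneg (x : Fin n → ℂ) : 0 ≤ vecNorm x := Real.sqrt_nonneg _

lemma vecNorm_ofLp (v : EuclideanSpace ℂ (Fin n)) : vecNorm v.ofLp = ‖v‖ := by
  rw [vecNorm_eq_norm, WithLp.toLp_ofLp]

lemma frobNorm_smul (r : ℝ) (Z : Matrix (Fin n) (Fin n) ℂ) :
    frobNorm (r • Z) = |r| * frobNorm Z := by
  rw [frobNorm_eq_norm, frobNorm_eq_norm, toEuclideanEntries_smul, norm_smul, Real.norm_eq_abs]

lemma frobNorm_sub_le_add (A B C : Matrix (Fin n) (Fin n) ℂ) :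
    frobNorm (A - C) ≤ frobNorm (A - B) + frobNorm (B - C) := by
  simp only [frobNorm_eq_norm, toEuclideanEntries_sub]
  exact norm_sub_le_norm_sub_add_norm_sub _ _ _

lemma star_dotProduct_self (x : Fin n → ℂ) : star x ⬝ᵥ x = (vecNorm x ^ 2 : ℝ) := by
  have h := inner_self_eq_norm_sq_to_K (𝕜 := ℂ) (WithLp.toLp 2 x)
  rw [EuclideanSpace.inner_toLp_toLp, dotProduct_comm] at h
  rw [h, vecNorm_eq_norm]
  push_cast
  rfl

lemma inner_toEuclideanEntries_vecMulVec (x : Fin n → ℂ) (B : Matrix (Fin n) (Fin n) ℂ) :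
    ⟪toEuclideanEntries (vecMulVec x (star x)), toEuclideanEntries B⟫_ℂ =
      star x ⬝ᵥ (B *ᵥ x) := by
  simp only [toEuclideanEntries, EuclideanSpace.inner_toLp_toLp, dotProduct, mulVec,
    Fintype.sum_prod_type, vecMulVec_apply, Finset.mul_sum]
  refine Finset.sum_congr rfl fun i _ => Finset.sum_congr rfl fun j _ => ?_
  simp only [Pi.star_apply, Complex.star_def, map_mul, Complex.conj_conj]
  ring

lemma re_inner_toEuclideanEntries_vecMulVec (x v : Fin n → ℂ) :
    RCLike.re ⟪toEuclideanEntries (vecMulVec x (star x)),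
      toEuclideanEntries (vecMulVec v (star v))⟫_ℂ = Complex.normSq (star v ⬝ᵥ x) := by
  rw [inner_toEuclideanEntries_vecMulVec, star_dotProduct_vecMulVec_mulVec]
  rfl

lemma frobNorm_vecMulVec (x : Fin n → ℂ) :
    frobNorm (vecMulVec x (star x)) = vecNorm x ^ 2 := by
  have h := re_inner_toEuclideanEntries_vecMulVec x x
  rw [inner_self_eq_norm_sq, ← frobNorm_eq_norm, star_dotProduct_self, Complex.normSq_ofReal] at h
  nlinarith [frobNorm_nonneg (vecMulVec x (star x)), sq_nonneg (vecNorm x)]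

lemma frobNorm_sub_vecMulVec_sq (x v : Fin n → ℂ) :
    frobNorm (vecMulVec x (star x) - vecMulVec v (star v)) ^ 2 =
      vecNorm x ^ 4 + vecNorm v ^ 4 - 2 * Complex.normSq (star v ⬝ᵥ x) := by
  rw [frobNorm_eq_norm, toEuclideanEntries_sub, norm_sub_sq (𝕜 := ℂ),
    re_inner_toEuclideanEntries_vecMulVec, ← frobNorm_eq_norm, ← frobNorm_eq_norm,
    frobNorm_vecMulVec, frobNorm_vecMulVec]
  ring

lemma Matrix.IsHermitian.eigenvalues_le_frobNorm {A : Matrix (Fin n) (Fin n) ℂ}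
    (hA : A.IsHermitian) (i : Fin n) : hA.eigenvalues i ≤ frobNorm A := by
  set v := ⇑(hA.eigenvectorBasis i)
  calc hA.eigenvalues i
      = RCLike.re ⟪toEuclideanEntries (vecMulVec v (star v)), toEuclideanEntries A⟫_ℂ := by
        rw [inner_toEuclideanEntries_vecMulVec, hA.eigenvalues_eq]
    _ ≤ frobNorm (vecMulVec v (star v)) * frobNorm A := by
        rw [frobNorm_eq_norm, frobNorm_eq_norm]
        exact re_inner_le_norm _ _
    _ = frobNorm A := by
        rw [frobNorm_vecMulVec, vecNorm_ofLp, hA.eigenvectorBasis.norm_eq_one, one_pow, one_mul]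

lemma frobNorm_sub_smul_vecMulVec_le {Y : Matrix (Fin n) (Fin n) ℂ} (hY : Y.IsHermitian)
    {μ : ℝ} (hμ : ∀ i, hY.eigenvalues i ≤ μ) {v : Fin n → ℂ} (hv : vecNorm v = 1)
    (hYv : Y *ᵥ v = (μ : ℂ) • v) (x : Fin n → ℂ) :
    frobNorm (Y - (μ : ℂ) • vecMulVec v (star v)) ≤ frobNorm (vecMulVec x (star x) - Y) := by
  have hYW : frobNorm (Y - (μ : ℂ) • vecMulVec v (star v)) ^ 2 = frobNorm Y ^ 2 - μ ^ 2 := by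
    have hinner : ⟪toEuclideanEntries (vecMulVec v (star v)), toEuclideanEntries Y⟫_ℂ = μ := by
      rw [inner_toEuclideanEntries_vecMulVec, hYv, dotProduct_smul, star_dotProduct_self, hv]
      simp
    rw [frobNorm_eq_norm, toEuclideanEntries_sub, norm_sub_rev, toEuclideanEntries_smul,
      norm_sub_sq (𝕜 := ℂ), inner_smul_left, hinner, norm_smul, ← frobNorm_eq_norm,
      ← frobNorm_eq_norm, frobNorm_vecMulVec, hv, Complex.conj_ofReal, ← Complex.ofReal_mul,
      RCLike.re_to_complex, Complex.ofReal_re, Complex.norm_real, Real.norm_eq_abs]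
    nlinarith [sq_abs μ]
  have hAY : frobNorm (vecMulVec x (star x) - Y) ^ 2 =
      vecNorm x ^ 4 - 2 * (star x ⬝ᵥ (Y *ᵥ x)).re + frobNorm Y ^ 2 := by
    rw [frobNorm_eq_norm, toEuclideanEntries_sub, norm_sub_sq (𝕜 := ℂ),
      inner_toEuclideanEntries_vecMulVec, ← frobNorm_eq_norm, ← frobNorm_eq_norm,
      frobNorm_vecMulVec, RCLike.re_to_complex]
    ring
  have hquad := hY.re_star_dotProduct_mulVec_le hμ x
  rw [← vecNorm_eq_norm] at hquad
  rw [← sq_le_sq₀ (frobNorm_nonneg _) (frobNorm_nonneg _), hYW, hAY]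
  nlinarith [sq_nonneg (vecNorm x ^ 2 - μ)]

end Frobenius

lemma isClosed_setOf_posSemidef {n : Type*} [Fintype n] :
    IsClosed {A : Matrix n n ℂ | A.PosSemidef} := by
  simp only [posSemidef_iff_dotProduct_mulVec, Set.ofPred_and, Set.ofPred_forall]
  exact (isClosed_eq continuous_id.matrix_conjTranspose continuous_id).inter
    (isClosed_iInter fun w => isClosed_le continuous_const
      (continuous_const.dotProduct (continuous_id.matrix_mulVec continuous_const)))

section Robust

variable {n : ℕ} {ι : Type*} [Fintype ι] {M : Matrix (Fin n) (Fin n) ℂ →ₗ[ℝ] EuclideanSpace ℝ ι}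

lemma continuous_frobNorm : Continuous (frobNorm : Matrix (Fin n) (Fin n) ℂ → ℝ) := by
  unfold frobNorm
  fun_prop

lemma continuous_vecNorm : Continuous (vecNorm : (Fin n → ℂ) → ℝ) := by
  unfold vecNorm
  fun_prop

def unitDominatedPairs (n : ℕ) : Set (Matrix (Fin n) (Fin n) ℂ × (Fin n → ℂ)) :=
  {p | frobNorm p.1 = 1 ∧ vecNorm p.2 = 1 ∧ (vecMulVec p.2 (star p.2) - p.1).PosSemidef}

lemma isCompact_unitDominatedPairs : IsCompact (unitDominatedPairs n) := by
  have hclosed : IsClosed (unitDominatedPairs n) :=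
    (isClosed_eq (continuous_frobNorm.comp continuous_fst) continuous_const).inter
      ((isClosed_eq (continuous_vecNorm.comp continuous_snd) continuous_const).inter
        (isClosed_setOf_posSemidef.preimage
          ((continuous_snd.matrix_vecMulVec continuous_snd.star).sub continuous_fst)))
  let ofEntries : EuclideanSpace ℂ (Fin n × Fin n) → Matrix (Fin n) (Fin n) ℂ :=
    fun u => Matrix.of fun i j => u (i, j)
  have hofEntries : Continuous ofEntries := by fun_prop
  refine (((isCompact_sphere 0 1).image hofEntries).prod
    ((isCompact_sphere 0 1).image (PiLp.continuous_ofLp 2 _))).of_isClosed_subset hclosed ?_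
  rintro ⟨D, v⟩ ⟨hD, hv, -⟩
  refine ⟨⟨toEuclideanEntries D, ?_, rfl⟩, ⟨WithLp.toLp 2 v, ?_, rfl⟩⟩
  · rw [mem_sphere_zero_iff_norm, ← frobNorm_eq_norm, hD]
  · rw [mem_sphere_zero_iff_norm, ← vecNorm_eq_norm, hv]

lemma exists_vecNorm_eq_one_posSemidef_frobNorm_smul_sub [Nonempty (Fin n)]
    {D : Matrix (Fin n) (Fin n) ℂ} (hD : D.IsHermitian) {x : Fin n → ℂ}
    (hx : (vecMulVec x (star x) - D).PosSemidef) :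
    ∃ v, vecNorm v = 1 ∧ ((frobNorm D : ℂ) • vecMulVec v (star v) - D).PosSemidef := by
  obtain ⟨k, hk⟩ := Finite.exists_max hD.eigenvalues
  exact ⟨_, by rw [vecNorm_ofLp, hD.eigenvectorBasis.norm_eq_one],
    hD.posSemidef_smul_vecMulVec_eigenvectorBasis_sub hx hk (hD.eigenvalues_le_frobNorm k)⟩

lemma exists_pos_le_norm_of_mem_unitDominatedPairs (hM : rComplete M 1) :
    ∃ c > 0, ∀ p ∈ unitDominatedPairs n, c ≤ ‖M p.1‖ := by
  rcases (unitDominatedPairs n).eq_empty_or_nonempty with hK | hK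
  · exact ⟨1, one_pos, by simp [hK]⟩
  obtain ⟨⟨D, v⟩, ⟨hD, -, hvD⟩, hmin⟩ := isCompact_unitDominatedPairs.exists_isMinOn hK
    (M.continuous_of_finiteDimensional.comp continuous_fst).norm.continuousOn
  refine ⟨‖M D‖, norm_pos_iff.mpr fun hMD => ?_, fun p hp => isMinOn_iff.mp hmin p hp⟩
  have hD0 : D ≠ 0 := by
    rintro rfl
    simp [frobNorm] at hD
  refine hM _ _ (posSemidef_vecMulVec_self_star v) (rank_vecMulVec_le _ _) hvD
    (fun h => hD0 (sub_eq_self.mp h.symm)) ?_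
  rw [map_sub, hMD, sub_zero]

theorem exists_frobNorm_le_mul_norm_of_rComplete (hM : rComplete M 1) :
    ∃ C > 0, ∀ (x : Fin n → ℂ) (Y : Matrix (Fin n) (Fin n) ℂ), Y.PosSemidef →
      frobNorm (vecMulVec x (star x) - Y) ≤ C * ‖M (vecMulVec x (star x) - Y)‖ := by
  obtain ⟨c, hc, hcK⟩ := exists_pos_le_norm_of_mem_unitDominatedPairs hM
  refine ⟨c⁻¹, inv_pos.mpr hc, fun x Y hY => ?_⟩
  set D := vecMulVec x (star x) - Y
  rcases (frobNorm_nonneg D).eq_or_lt with ht | ht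
  · rw [← ht]
    positivity
  have : Nonempty (Fin n) := by
    by_contra h
    rw [not_nonempty_iff] at h
    simp [frobNorm] at ht
  set t := frobNorm D
  obtain ⟨v, hv, hvD⟩ := exists_vecNorm_eq_one_posSemidef_frobNorm_smul_sub (x := x)
    ((posSemidef_vecMulVec_self_star x).1.sub hY.1) (by rwa [sub_sub_cancel])
  have hmem : (t⁻¹ • D, v) ∈ unitDominatedPairs n := by
    refine ⟨?_, hv, ?_⟩
    · rw [frobNorm_smul, abs_of_pos (inv_pos.mpr ht), inv_mul_cancel₀ ht.ne']
    · have hscale : t⁻¹ • ((t : ℂ) • vecMulVec v (star v) - D) =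
          vecMulVec v (star v) - t⁻¹ • D := by
        rw [smul_sub t⁻¹ ((t : ℂ) • vecMulVec v (star v)) D, Complex.coe_smul, smul_smul,
          inv_mul_cancel₀ ht.ne', one_smul]
      rw [← hscale]
      exact hvD.smul (inv_nonneg.mpr ht.le)
  have hle := hcK _ hmem
  rw [map_smul, norm_smul, Real.norm_of_nonneg (inv_nonneg.mpr ht.le), le_inv_mul_iff₀ ht] at hle
  rw [le_inv_mul_iff₀ hc]
  linarith

end Robust

lemma exists_mem_Ico_exp_mul_I_mul_eq_norm (s : ℂ) :
    ∃ φ ∈ Set.Ico 0 (2 * Real.pi), Complex.exp (φ * Complex.I) * s = ‖s‖ := by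
  refine ⟨toIcoMod Real.two_pi_pos 0 (-s.arg), toIcoMod_mem_Ico' _ _, ?_⟩
  rw [eq_sub_of_add_eq <| toIcoMod_add_toIcoDiv_zsmul _ _ _, Complex.ofReal_sub,
    Complex.ofReal_zsmul, Complex.ofReal_mul, Complex.ofReal_ofNat,
    Complex.exp_mul_I_periodic.sub_zsmul_eq]
  calc Complex.exp (↑(-s.arg) * Complex.I) * s
      = Complex.exp (-(s.arg * Complex.I)) * (‖s‖ * Complex.exp (s.arg * Complex.I)) := by
        rw [Complex.norm_mul_exp_arg_mul_I, Complex.ofReal_neg, neg_mul]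
    _ = ‖s‖ := by
        rw [mul_left_comm, ← Complex.exp_add, neg_add_cancel, Complex.exp_zero, mul_one]

lemma sq_add_sq_sub_two_mul_mul_sq_le {p q r : ℝ} (hp : 0 ≤ p) (hq : 0 ≤ q) (hr : 0 ≤ r)
    (hrqp : r ≤ q * p) : (p ^ 2 + q ^ 2 - 2 * r) * p ^ 2 ≤ 2 * (p ^ 4 + q ^ 4 - 2 * r ^ 2) := by
  have hf0 : 0 ≤ p ^ 4 - p ^ 2 * q ^ 2 + 2 * q ^ 4 := by
    nlinarith [sq_nonneg (2 * p ^ 2 - q ^ 2), sq_nonneg q]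
  have hfqp : 0 ≤ (p - q) ^ 2 * (p ^ 2 + 4 * p * q + 2 * q ^ 2) :=
    mul_nonneg (sq_nonneg _) (by positivity)
  nlinarith [mul_nonneg (mul_nonneg (mul_nonneg hq hp) hr) (sub_nonneg.mpr hrqp),
    mul_nonneg (sub_nonneg.mpr hrqp) hf0, mul_nonneg hr hfqp,
    mul_nonneg hq hp, sq_nonneg (p - q), sq_nonneg (q * p - r)]

section Phase

variable {n : ℕ}

lemma vecNorm_sub_smul_sq (x v : Fin n → ℂ) {c : ℂ} (hc : ‖c‖ = 1) :
    vecNorm (x - c • v) ^ 2 = vecNorm x ^ 2 - 2 * (c * (star x ⬝ᵥ v)).re + vecNorm v ^ 2 := by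
  rw [vecNorm_eq_norm, WithLp.toLp_sub, WithLp.toLp_smul, norm_sub_sq (𝕜 := ℂ), inner_smul_right,
    EuclideanSpace.inner_toLp_toLp, norm_smul, hc, one_mul, dotProduct_comm, ← vecNorm_eq_norm,
    ← vecNorm_eq_norm, RCLike.re_to_complex]

lemma exists_phase_mul_vecNorm_sub_le (x v : Fin n → ℂ) :
    ∃ φ ∈ Set.Ico 0 (2 * Real.pi),
      vecNorm x * vecNorm (x - Complex.exp (φ * Complex.I) • v) ≤
        Real.sqrt 2 * frobNorm (vecMulVec x (star x) - vecMulVec v (star v)) := by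
  set s := star x ⬝ᵥ v
  obtain ⟨φ, hφ, hφs⟩ := exists_mem_Ico_exp_mul_I_mul_eq_norm s
  refine ⟨φ, hφ, ?_⟩
  have hvec := vecNorm_sub_smul_sq x v (c := Complex.exp (φ * Complex.I)) (by simp)
  rw [hφs, Complex.ofReal_re] at hvec
  have hs : Complex.normSq (star v ⬝ᵥ x) = ‖s‖ ^ 2 := by
    rw [star_dotProduct, Complex.star_def, Complex.normSq_conj, Complex.normSq_eq_norm_sq]
  have hCS : ‖s‖ ≤ vecNorm v * vecNorm x := by
    rw [show s = ⟪WithLp.toLp 2 x, WithLp.toLp 2 v⟫_ℂ from dotProduct_comm _ _,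
      vecNorm_eq_norm, vecNorm_eq_norm, mul_comm]
    exact norm_inner_le_norm _ _
  rw [← sq_le_sq₀ (mul_nonneg (vecNorm_nonneg _) (vecNorm_nonneg _))
    (mul_nonneg (Real.sqrt_nonneg _) (frobNorm_nonneg _)), mul_pow, mul_pow,
    Real.sq_sqrt zero_le_two, hvec, frobNorm_sub_vecMulVec_sq, hs]
  nlinarith [sq_add_sq_sub_two_mul_mul_sq_le (vecNorm_nonneg x) (vecNorm_nonneg v)
    (norm_nonneg s) hCS]

end Phase

lemma vecMulVec_sqrt_smul {n : Type*} {μ : ℝ} (hμ : 0 ≤ μ) (v : n → ℂ) :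
    vecMulVec (Real.sqrt μ • v) (star (Real.sqrt μ • v)) = (μ : ℂ) • vecMulVec v (star v) := by
  ext i j
  simp only [vecMulVec_apply, Pi.smul_apply, Pi.star_apply, Matrix.smul_apply, Complex.real_smul,
    star_mul', Complex.star_def, Complex.conj_ofReal, smul_eq_mul]
  rw [mul_mul_mul_comm, ← Complex.ofReal_mul, Real.mul_self_sqrt hμ]

/-- stability of phase retrieval.  Let `M` be `1`-complete.  There is a
constant `C > 0` depending only on `M` such that: for nonzero `x ∈ ℂⁿ`, Hermitian `E`,
`ε ≥ ‖M(E)‖₂` with `ε > 0`, any PSD minimizer `Y` of the trace over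
`{Y ⪰ 0 : ‖M(Y) − M(xx* + E)‖₂ ≤ ε}`, any largest eigenvalue `μ = λ₁(Y)` with unit
eigenvector `x′`, and `x̂ := √μ·x′`, one has `‖xx* − x̂x̂*‖₂ ≤ 2Cε` and there is
`φ ∈ [0,2π)` with `‖x − e^{iφ}x̂‖₂ ≤ (2√2·C/‖x‖₂)·ε`. -/
theorem stmt11 {n m : ℕ}
    (M : Matrix (Fin n) (Fin n) ℂ →ₗ[ℝ] EuclideanSpace ℝ (Fin m))
    (hM : rComplete M 1) :
    ∃ C > (0 : ℝ),
      ∀ x : Fin n → ℂ, x ≠ 0 →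
      ∀ E : Matrix (Fin n) (Fin n) ℂ, E.IsHermitian →
      ∀ ε > (0 : ℝ), ‖M E‖ ≤ ε →
      ∀ Y : Matrix (Fin n) (Fin n) ℂ, ∀ hY : Y.PosSemidef,
        ‖M Y - M (vecMulVec x (star x) + E)‖ ≤ ε →
        (∀ Z : Matrix (Fin n) (Fin n) ℂ, Z.PosSemidef →
          ‖M Z - M (vecMulVec x (star x) + E)‖ ≤ ε → (Y.trace).re ≤ (Z.trace).re) →
      ∀ μ : ℝ, (∀ i, hY.1.eigenvalues i ≤ μ) → (∃ i, hY.1.eigenvalues i = μ) →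
      ∀ x' : Fin n → ℂ, vecNorm x' = 1 → Y.mulVec x' = (μ : ℂ) • x' →
        frobNorm (vecMulVec x (star x) -
            vecMulVec (Real.sqrt μ • x') (star (Real.sqrt μ • x'))) ≤ 2 * C * ε ∧
        ∃ φ ∈ Set.Ico (0 : ℝ) (2 * Real.pi),
          vecNorm (x - Complex.exp (φ * Complex.I) • Real.sqrt μ • x') ≤
            2 * Real.sqrt 2 * C / vecNorm x * ε := by
  obtain ⟨C, hC, hCM⟩ := exists_frobNorm_le_mul_norm_of_rComplete hM
  refine ⟨2 * C, by positivity, fun x hx E _ ε _ hME Y hY hYε _ μ hμ ⟨i, hi⟩ x' hx' hYx' => ?_⟩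
  have hMAY : ‖M (vecMulVec x (star x) - Y)‖ ≤ 2 * ε := by
    rw [show M (vecMulVec x (star x) - Y) = -(M Y - M (vecMulVec x (star x) + E)) - M E by
      rw [map_sub, map_add]; abel]
    linarith [norm_sub_le (-(M Y - M (vecMulVec x (star x) + E))) (M E),
      norm_neg (M Y - M (vecMulVec x (star x) + E))]
  have hAY : frobNorm (vecMulVec x (star x) - Y) ≤ C * (2 * ε) :=
    (hCM x Y hY).trans (mul_le_mul_of_nonneg_left hMAY hC.le)
  have hAW : frobNorm (vecMulVec x (star x) - (μ : ℂ) • vecMulVec x' (star x')) ≤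
      2 * (2 * C) * ε := by
    linarith [frobNorm_sub_le_add (vecMulVec x (star x)) Y ((μ : ℂ) • vecMulVec x' (star x')),
      frobNorm_sub_smul_vecMulVec_le hY.1 hμ hx' hYx' x]
  rw [vecMulVec_sqrt_smul (hi ▸ hY.eigenvalues_nonneg i)]
  obtain ⟨φ, hφ, hφx⟩ := exists_phase_mul_vecNorm_sub_le x (Real.sqrt μ • x')
  rw [vecMulVec_sqrt_smul (hi ▸ hY.eigenvalues_nonneg i)] at hφx
  have hx0 : 0 < vecNorm x := by
    rw [vecNorm_eq_norm, norm_pos_iff]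
    exact fun h => hx (congrArg WithLp.ofLp h)
  refine ⟨hAW, φ, hφ, ?_⟩
  rw [div_mul_eq_mul_div, le_div_iff₀ hx0, mul_comm]
  nlinarith [Real.sqrt_nonneg 2]
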